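/- Let G be a finite simple graph of order n with r = χ(G), where n is NOT congruent to r − 1 modulo r, and suppose es_χ(G) = ⌊n/r⌋². Then for every proper coloring of G with exactly r color classes C_1, …, C_r ordered so that |C_1| ≤ ⋯ ≤ |C_r|, one has |C_1| = |C_2| = ⌊n/r⌋. -/

import Mathlib

/-!
Deleting the edges between the two smallest classes `C₁`, `C₂` of an `r`-coloring lets
`C₁ ∪ C₂` become one class, so `⌊n/r⌋² = es_χ(G) ≤ |C₁| |C₂|`. On the other hand
`|C₁| + (r - 1) |C₂| ≤ n`, and since `n mod r ≤ r - 2` this leaves no room for `|C₂| > ⌊n/r⌋`: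
it would force `|C₁| + |C₂| ≤ 2 ⌊n/r⌋` and hence `|C₁| |C₂| < ⌊n/r⌋²`.
-/

open Function

/-- The chromatic-stability index: the minimum number of edges whose removal
decreases the chromatic number (0 if no such edge set exists, e.g. for edgeless graphs). -/
noncomputable def esChi {V : Type*} [Fintype V] (G : SimpleGraph V) : ℕ :=
  sInf {k | ∃ F : Finset (Sym2 V),
    ↑F ⊆ G.edgeSet ∧ F.card = k ∧
    (G.deleteEdges ↑F).chromaticNumber < G.chromaticNumber}

open scoped Classical in
/-- The color class of color `i` under the coloring `c`, as a `Finset`. -/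
noncomputable def classOf {V : Type*} [Fintype V] {G : SimpleGraph V} {α : Type*}
    (c : G.Coloring α) (i : α) : Finset V :=
  Finset.univ.filter fun v => c v = i

open scoped Classical in
/-- The number of edges of `G` with one endpoint in `A` and the other in `B`
(for disjoint `A`, `B`). -/
noncomputable def eCC {V : Type*} [Fintype V] (G : SimpleGraph V) (A B : Finset V) : ℕ :=
  ((A ×ˢ B).filter fun p => G.Adj p.1 p.2).card

/-- `c*`: the minimum size of a color class over all proper colorings of `G`
using exactly `χ(G)` colors. -/
noncomputable def cStar {V : Type*} [Fintype V] (G : SimpleGraph V) : ℕ :=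
  sInf {k | ∃ (c : G.Coloring (Fin G.chromaticNumber.toNat))
      (i : Fin G.chromaticNumber.toNat),
    Surjective c ∧ k = (classOf c i).card}

/-- The chromatic bondage number: the minimum number of edges between two distinct
color classes, over all proper colorings of `G` using exactly `χ(G)` colors. -/
noncomputable def rhoChi {V : Type*} [Fintype V] (G : SimpleGraph V) : ℕ :=
  sInf {k | ∃ (c : G.Coloring (Fin G.chromaticNumber.toNat))
      (i j : Fin G.chromaticNumber.toNat),
    Surjective c ∧ i ≠ j ∧ k = eCC G (classOf c i) (classOf c j)}

open scoped Classical in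
noncomputable def edgesBetweenClasses {V α : Type*} [Fintype V] {G : SimpleGraph V}
    (c : G.Coloring α) (i j : α) : Finset (Sym2 V) :=
  ((classOf c i ×ˢ classOf c j).filter fun p => G.Adj p.1 p.2).image fun p => s(p.1, p.2)

theorem eCC_le_card_mul {V : Type*} [Fintype V] (G : SimpleGraph V) (A B : Finset V) :
    eCC G A B ≤ A.card * B.card := by
  classical
  exact (Finset.card_filter_le _ _).trans (Finset.card_product A B).le

section ColorClasses

variable {V α : Type*} [Fintype V] {G : SimpleGraph V} (c : G.Coloring α)

theorem mem_classOf {v : V} {i : α} : v ∈ classOf c i ↔ c v = i := by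
  simp [classOf]

theorem sum_card_classOf [Fintype α] : ∑ i, (classOf c i).card = Fintype.card V := by
  classical
  rw [← Finset.card_univ, Finset.card_eq_sum_card_fiberwise (t := Finset.univ)
    (f := c) (fun v _ => Finset.mem_univ (c v))]
  simp only [classOf]

theorem edgesBetweenClasses_subset_edgeSet (i j : α) :
    ↑(edgesBetweenClasses c i j) ⊆ G.edgeSet := by
  intro e he
  simp only [edgesBetweenClasses, Finset.coe_image, Set.mem_image, Finset.mem_coe,
    Finset.mem_filter] at he
  obtain ⟨_, ⟨_, hadj⟩, rfl⟩ := he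
  exact hadj

theorem card_edgesBetweenClasses_le (i j : α) :
    (edgesBetweenClasses c i j).card ≤ eCC G (classOf c i) (classOf c j) := by
  classical
  exact Finset.card_image_le

theorem mk_mem_edgesBetweenClasses {u v : V} (h : G.Adj u v) :
    s(u, v) ∈ edgesBetweenClasses c (c u) (c v) := by
  classical
  exact Finset.mem_image.2 ⟨(u, v), by simp [mem_classOf, h], rfl⟩

def mergeColors [DecidableEq α] {i j : α} (hij : i ≠ j) :
    (G.deleteEdges (edgesBetweenClasses c i j)).Coloring {k // k ≠ j} :=
  SimpleGraph.Coloring.mk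
    (fun v => if h : c v = j then ⟨i, hij⟩ else ⟨c v, h⟩)
    (by
      intro u v huv hcol
      rw [SimpleGraph.deleteEdges_adj] at huv
      obtain ⟨hadj, hF⟩ := huv
      have hne : c u ≠ c v := c.valid hadj
      by_cases hu : c u = j <;> by_cases hv : c v = j <;>
        simp only [hu, hv, dite_true, dite_false, Subtype.mk.injEq] at hcol
      · exact hne (hu.trans hv.symm)
      · rw [Sym2.eq_swap] at hF
        exact hF (hu ▸ hcol ▸ mk_mem_edgesBetweenClasses c hadj.symm)
      · exact hF (hv ▸ hcol ▸ mk_mem_edgesBetweenClasses c hadj)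
      · exact hne hcol)

end ColorClasses

theorem esChi_le_eCC {V : Type*} [Fintype V] {G : SimpleGraph V} {r : ℕ}
    (hchi : G.chromaticNumber = r) (c : G.Coloring (Fin r)) {i j : Fin r} (hij : i ≠ j) :
    esChi G ≤ eCC G (classOf c i) (classOf c j) := by
  have hlt : (G.deleteEdges (edgesBetweenClasses c i j)).chromaticNumber < G.chromaticNumber :=
    calc _ ≤ (Fintype.card {k // k ≠ j} : ℕ∞) := (mergeColors c hij).colorable.chromaticNumber_le
      _ = (r - 1 : ℕ) := by simp [Fintype.card_subtype_compl]
      _ < G.chromaticNumber := by rw [hchi]; exact_mod_cast Nat.sub_one_lt_of_lt i.pos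
  calc esChi G ≤ (edgesBetweenClasses c i j).card :=
        Nat.sInf_le ⟨_, edgesBetweenClasses_subset_edgeSet c i j, rfl, hlt⟩
    _ ≤ _ := card_edgesBetweenClasses_le c i j

theorem Monotone.add_mul_le_sum {m : ℕ} {f : Fin (m + 2) → ℕ} (hf : Monotone f) :
    f 0 + (m + 1) * f 1 ≤ ∑ i, f i := by
  rw [Fin.sum_univ_succ]
  gcongr
  simpa using Finset.card_nsmul_le_sum Finset.univ (fun i : Fin (m + 1) => f i.succ) (f 1)
    fun i _ => hf (Fin.succ_le_succ_iff.2 (Fin.zero_le i))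

theorem Nat.eq_div_of_sq_div_le_mul {n r a b : ℕ} (hr : 0 < r) (hmod : n % r ≠ r - 1)
    (hab : a ≤ b) (hsum : a + (r - 1) * b ≤ n) (hsq : (n / r) ^ 2 ≤ a * b) :
    a = n / r ∧ b = n / r := by
  set q := n / r
  have hn : r * q + n % r = n := Nat.div_add_mod n r
  have hs : n % r + 2 ≤ r := by have := Nat.mod_lt n hr; omega
  obtain ⟨k, rfl⟩ : ∃ k, r = k + 2 := ⟨r - 2, by omega⟩
  have hbq : b ≤ q := by
    by_contra! hb
    have : a + b ≤ 2 * q := by rw [show k + 2 - 1 = k + 1 from rfl] at hsum; nlinarith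
    nlinarith
  constructor <;> nlinarith

/-- If `n ≢ r − 1 (mod r)` where `r = χ(G)` and `es_χ(G) = ⌊n/r⌋²`,
then every proper coloring of `G` with exactly `r` color classes ordered by
nondecreasing size has `|C₁| = |C₂| = ⌊n/r⌋`. -/
theorem extremal_coloring_two_small_classes {V : Type*} [Fintype V]
    (G : SimpleGraph V) (r : ℕ) (hchi : G.chromaticNumber = r)
    (hmod : Fintype.card V % r ≠ r - 1)
    (hes : esChi G = (Fintype.card V / r) ^ 2) :
    ∀ c : G.Coloring (Fin r), Surjective c →
      (∀ i j : Fin r, i ≤ j → (classOf c i).card ≤ (classOf c j).card) →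
      ∀ i : Fin r, i.val ≤ 1 → (classOf c i).card = Fintype.card V / r := by
  intro c _ hmono i hi
  have hr1 : r ≠ 1 := by rintro rfl; exact hmod (Nat.mod_one _)
  obtain ⟨m, rfl⟩ : ∃ m, r = m + 2 := ⟨r - 2, by have := i.pos; omega⟩
  have hsq : (Fintype.card V / (m + 2)) ^ 2 ≤ (classOf c 0).card * (classOf c 1).card :=
    hes ▸ (esChi_le_eCC hchi c Fin.zero_ne_one).trans (eCC_le_card_mul G _ _)
  have hsum := (show Monotone fun j => (classOf c j).card from hmono).add_mul_le_sum
  rw [sum_card_classOf] at hsum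
  obtain ⟨h0, h1⟩ :=
    Nat.eq_div_of_sq_div_le_mul (by omega) hmod (hmono 0 1 (Fin.zero_le 1)) hsum hsq
  obtain rfl | rfl : i = 0 ∨ i = 1 := by
    rcases Nat.le_one_iff_eq_zero_or_eq_one.1 hi with h | h
    exacts [Or.inl (Fin.ext h), Or.inr (Fin.ext (h.trans (Fin.val_one _).symm))]
  exacts [h0, h1]
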